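/- Let 𝒢 and 𝒦 be groupoids with 𝒢₀ finite, A a unital 𝒢-graded algebra, and X a finite (𝒢_α,𝒦_β)-set that is split for both actions. Let γ be the induced action of 𝒦 on A #_α^𝒢 X, λ the induced 𝒢-action on the orbit set O^𝒦, and φ* : A #_λ^𝒢 O^𝒦 → A #_α^𝒢 X the algebra monomorphism induced by the orbit map φ(x)=o(x). Then φ*(A #_λ^𝒢 O^𝒦) = (A #_α^𝒢 X)^γ, the subalgebra of invariants of A #_α^𝒢 X under γ; in particular A #_λ^𝒢 O^𝒦 ≅ (A #_α^𝒢 X)^γ as algebras. -/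

import Mathlib

open scoped Classical

noncomputable section

universe u v w

/-- A groupoid, presented as a set of morphisms with partially defined
composition.  `s g` is the domain (source) identity `d(g)`, `t g` the range
(target) identity `r(g)`; `mul g h` is the composite `gh`, meaningful when
`s g = t h`. -/
structure Gpd (G : Type u) where
  s : G → G
  t : G → G
  inv : G → G
  mul : G → G → G
  s_s : ∀ g, s (s g) = s g
  t_s : ∀ g, t (s g) = s g
  s_t : ∀ g, s (t g) = t g
  t_t : ∀ g, t (t g) = t g
  s_mul : ∀ g h, s g = t h → s (mul g h) = s h
  t_mul : ∀ g h, s g = t h → t (mul g h) = t g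
  mul_assoc : ∀ g h l, s g = t h → s h = t l → mul (mul g h) l = mul g (mul h l)
  mul_src : ∀ g, mul g (s g) = g
  tgt_mul : ∀ g, mul (t g) g = g
  s_inv : ∀ g, s (inv g) = t g
  t_inv : ∀ g, t (inv g) = s g
  inv_mul : ∀ g, mul (inv g) g = s g
  mul_inv : ∀ g, mul g (inv g) = t g

namespace Gpd

variable {G : Type u}

/-- `e` is an object (identity) of the groupoid. -/
def obj (𝒢 : Gpd G) (e : G) : Prop := 𝒢.s e = e

/-- The set `𝒢₀` of objects of the groupoid. -/
def Objs (𝒢 : Gpd G) : Set G := {e | 𝒢.obj e}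

end Gpd

/-- An action `α = (X_g, α_g)` of a groupoid `𝒢` on a set `X`:
`car g` is the subset `X_g` and `act g` restricts to the bijection
`α_g : X_{g⁻¹} → X_g`. -/
structure GpdSetAction {G : Type u} (𝒢 : Gpd G) (X : Type v) where
  car : G → Set X
  act : G → X → X
  car_t : ∀ g, car g = car (𝒢.t g)
  bijOn : ∀ g, Set.BijOn (act g) (car (𝒢.inv g)) (car g)
  act_id : ∀ e, 𝒢.obj e → ∀ x ∈ car e, act e x = x
  act_mul : ∀ g h, 𝒢.s g = 𝒢.t h → ∀ x ∈ car (𝒢.inv h),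
    act g (act h x) = act (𝒢.mul g h) x

/-- `X` is a split `𝒢`-set: `X` is the disjoint union of the `X_e`, `e ∈ 𝒢₀`. -/
def GpdSetAction.Split {G : Type u} {𝒢 : Gpd G} {X : Type v} (α : GpdSetAction 𝒢 X) : Prop :=
  ∀ x : X, ∃! e : G, 𝒢.obj e ∧ x ∈ α.car e

/-- The action is fully faithful: if `α_g` fixes some `x ∈ X_g ∩ X_{g⁻¹}`
then `g` is an identity. -/
def GpdSetAction.FullyFaithful {G : Type u} {𝒢 : Gpd G} {X : Type v}
    (α : GpdSetAction 𝒢 X) : Prop :=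
  ∀ g x, x ∈ α.car g ∩ α.car (𝒢.inv g) → α.act g x = x → 𝒢.obj g

/-- A `𝒢`-grading of the `k`-algebra `A`:  `A = ⊕_{g ∈ 𝒢} A_g` with
`A_g A_h ⊆ A_{gh}` for composable `g, h` and `A_g A_h = 0` otherwise. -/
structure GpdGrading {G : Type u} (𝒢 : Gpd G) (k : Type v) (A : Type w)
    [Field k] [Ring A] [Algebra k A] where
  comp : G → Submodule k A
  internal : DirectSum.IsInternal comp
  mul_mem : ∀ g h, 𝒢.s g = 𝒢.t h → ∀ a ∈ comp g, ∀ b ∈ comp h, a * b ∈ comp (𝒢.mul g h)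
  mul_eq_zero : ∀ g h, 𝒢.s g ≠ 𝒢.t h → ∀ a ∈ comp g, ∀ b ∈ comp h, a * b = 0

/-- The homogeneous component of degree `g` of `a ∈ A`. -/
noncomputable def GpdGrading.proj {G : Type u} {𝒢 : Gpd G} {k : Type v} {A : Type w}
    [Field k] [Ring A] [Algebra k A] (𝒜 : GpdGrading 𝒢 k A) (g : G) (a : A) : A :=
  ((Equiv.ofBijective _ 𝒜.internal).symm a g : A)

/-- `one : G → A` is a family of local units for the grading: each `one e`
(`e ∈ 𝒢₀`) is an identity element of `A_e` and `1_A = Σ_{e ∈ 𝒢₀} 1_e`. -/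
def IsIdFamily {G : Type u} {𝒢 : Gpd G} {k : Type v} {A : Type w}
    [Field k] [Ring A] [Algebra k A] (𝒜 : GpdGrading 𝒢 k A) (one : G → A) : Prop :=
  (∀ e, 𝒢.obj e → one e ∈ 𝒜.comp e ∧ ∀ a ∈ 𝒜.comp e, one e * a = a ∧ a * one e = a) ∧
  (1 : A) = ∑ᶠ e ∈ 𝒢.Objs, one e

/-- The multiplication of the smash product `A #_α^𝒢 X`, defined on the
ambient space of formal sums `Σ a_{(g,x)} δ_{(g,x)}`:
`(a δ_{(g,x)}) (b δ_{(h,y)}) = (a b) δ_{(gh, y)}` when `d(g) = r(h)` and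
`α_h(y) = x`, and `0` otherwise. -/
noncomputable def smashMul {G : Type u} {𝒢 : Gpd G} {X : Type v} {A : Type w} [Ring A]
    (α : GpdSetAction 𝒢 X) (f₁ f₂ : (G × X) →₀ A) : (G × X) →₀ A :=
  f₁.sum fun p a => f₂.sum fun q b =>
    if 𝒢.s p.1 = 𝒢.t q.1 ∧ α.act q.1 q.2 = p.2
    then Finsupp.single (𝒢.mul p.1 q.1, q.2) (a * b) else 0

/-- The underlying set of the smash product `A #_α^𝒢 X = ⊕_{g} ⊕_{x ∈ X_{d(g)}} A_g δ_x`: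
those formal sums whose `(g,x)`-coefficient lies in `A_g`, supported on pairs
with `x ∈ X_{d(g)}`. -/
def smashSet {G : Type u} {𝒢 : Gpd G} {X : Type v} {k : Type*} {A : Type w}
    [Field k] [Ring A] [Algebra k A]
    (α : GpdSetAction 𝒢 X) (𝒜 : GpdGrading 𝒢 k A) : Set ((G × X) →₀ A) :=
  {f | ∀ p : G × X, f p ∈ 𝒜.comp p.1 ∧ (f p ≠ 0 → p.2 ∈ α.car (𝒢.s p.1))}

/-- The identity element `Σ_{e ∈ 𝒢₀} Σ_{x ∈ X_e} 1_e δ_x` of the smash product. -/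
noncomputable def smashOne {G : Type u} {𝒢 : Gpd G} {X : Type v} {A : Type w} [Ring A]
    (α : GpdSetAction 𝒢 X) (one : G → A) : (G × X) →₀ A :=
  ∑ᶠ e ∈ 𝒢.Objs, ∑ᶠ x ∈ α.car e, Finsupp.single ((e, x) : G × X) (one e)

/-- `X` is a `(𝒢_α, 𝒦_β)`-set:  each `Y_k` is `α`-invariant, each `X_g` is
`β`-invariant, and the two actions commute. -/
structure GKCompat {G : Type u} {K : Type*} {𝒢 : Gpd G} {𝒦 : Gpd K} {X : Type v}
    (α : GpdSetAction 𝒢 X) (β : GpdSetAction 𝒦 X) : Prop where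
  alpha_inv : ∀ g κ, α.act g '' (α.car (𝒢.inv g) ∩ β.car κ) ⊆ α.car g ∩ β.car κ
  beta_inv : ∀ g κ, β.act κ '' (α.car g ∩ β.car (𝒦.inv κ)) ⊆ α.car g ∩ β.car κ
  comm : ∀ g κ x, x ∈ α.car (𝒢.inv g) ∩ β.car (𝒦.inv κ) →
    α.act g (β.act κ x) = β.act κ (α.act g x)

/-- The ideal `E_k = A #^𝒢_{θ^k} Y_k = ⊕_g ⊕_{x ∈ Y_k ∩ X_{d(g)}} A_g δ_x`
of the smash product `A #_α^𝒢 X`. -/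
def Eset {G : Type u} {K : Type*} {𝒢 : Gpd G} {𝒦 : Gpd K} {X : Type v}
    {k : Type*} {A : Type w} [Field k] [Ring A] [Algebra k A]
    (α : GpdSetAction 𝒢 X) (β : GpdSetAction 𝒦 X) (𝒜 : GpdGrading 𝒢 k A)
    (κ : K) : Set ((G × X) →₀ A) :=
  {f | f ∈ smashSet α 𝒜 ∧ ∀ p : G × X, f p ≠ 0 → p.2 ∈ β.car κ}

/-- The map `γ_k : E_{k⁻¹} → E_k`, `γ_k(a_g δ_y) = a_g δ_{β_k(y)}`. -/
noncomputable def gammaAct {G : Type u} {K : Type*} {𝒦 : Gpd K} {X : Type v} {A : Type w}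
    [Ring A] (β : GpdSetAction 𝒦 X) (κ : K) (f : (G × X) →₀ A) : (G × X) →₀ A :=
  f.sum fun p a =>
    if p.2 ∈ β.car (𝒦.inv κ) then Finsupp.single ((p.1, β.act κ p.2) : G × X) a else 0

/-- The identity element `𝟏_k = Σ_{e ∈ 𝒢₀} Σ_{x ∈ Y_k ∩ X_e} 1_e δ_x` of `E_k`. -/
noncomputable def OneE {G : Type u} {K : Type*} {𝒢 : Gpd G} {𝒦 : Gpd K} {X : Type v}
    {A : Type w} [Ring A]
    (α : GpdSetAction 𝒢 X) (β : GpdSetAction 𝒦 X) (one : G → A) (κ : K) : (G × X) →₀ A :=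
  ∑ᶠ e ∈ 𝒢.Objs, ∑ᶠ x ∈ (β.car κ ∩ α.car e), Finsupp.single ((e, x) : G × X) (one e)

/-- The `𝒦`-orbit `o(x) = {β_k(x) : k ∈ D_p}` of `x ∈ Y_p`. -/
def orbit {K : Type*} {𝒦 : Gpd K} {X : Type v} (β : GpdSetAction 𝒦 X) (x : X) : Set X :=
  {y | ∃ κ, x ∈ β.car (𝒦.inv κ) ∧ β.act κ x = y}

/-- The set `O^𝒦` of `𝒦`-orbits of `X`. -/
abbrev OrbT {K : Type*} {𝒦 : Gpd K} {X : Type v} (β : GpdSetAction 𝒦 X) : Type v :=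
  {o : Set X // ∃ x, orbit β x = o}

/-- The orbit map `φ : X → O^𝒦`, `φ(x) = o(x)`. -/
def orbMap {K : Type*} {𝒦 : Gpd K} {X : Type v} (β : GpdSetAction 𝒦 X) (x : X) : OrbT β :=
  ⟨orbit β x, ⟨x, rfl⟩⟩

/-- The monomorphism `φ* : A #_λ^𝒢 O^𝒦 → A #_α^𝒢 X` induced by the orbit map,
`φ*(a_g δ_{o(x)}) = Σ_{y ∈ X_{d(g)}, o(y) = o(x)} a_g δ_y`. -/
noncomputable def phiStar {G : Type u} {K : Type*} {𝒢 : Gpd G} {𝒦 : Gpd K} {X : Type v}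
    {A : Type w} [Ring A] (α : GpdSetAction 𝒢 X) (β : GpdSetAction 𝒦 X)
    (f : (G × OrbT β) →₀ A) : (G × X) →₀ A :=
  f.sum fun p a =>
    ∑ᶠ y ∈ {y | y ∈ α.car (𝒢.s p.1) ∧ orbit β y = (p.2 : Set X)},
      Finsupp.single ((p.1, y) : G × X) a

/-- The subalgebra of invariants `(A #_α^𝒢 X)^γ`:  all `b` in the smash
product with `γ_k(b 𝟏_{k⁻¹}) = b 𝟏_k` for every `k ∈ 𝒦`. -/
noncomputable def invariantSet {G : Type u} {K : Type*} {𝒢 : Gpd G} {𝒦 : Gpd K} {X : Type v}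
    {k : Type*} {A : Type w} [Field k] [Ring A] [Algebra k A]
    (α : GpdSetAction 𝒢 X) (β : GpdSetAction 𝒦 X) (𝒜 : GpdGrading 𝒢 k A)
    (one : G → A) : Set ((G × X) →₀ A) :=
  {f | f ∈ smashSet α 𝒜 ∧ ∀ κ : K,
    gammaAct β κ (smashMul α f (OneE α β one (𝒦.inv κ))) = smashMul α f (OneE α β one κ)}


/-!
Right multiplication by `𝟏_k` restricts an element of `A #_α^𝒢 X` to `Y_k`, and `γ_k` moves
the `X`-coordinate by `β_k`; hence `F` is `γ`-invariant exactly when `F (g, x)` is constant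
along the `𝒦`-orbits in `x`. These are precisely the values of `φ*`, since
`φ* f (g, x) = f (g, o(x))` on `X_{d(g)}`, and reading `F` off at one representative of each
orbit inverts `φ*`. Multiplicativity is checked on homogeneous elements, where
`λ_h (o(y)) = o(α_h y)` is what matches the two products.
-/

namespace Gpd

variable {G : Type*} (𝒢 : Gpd G)

lemma obj_s (g : G) : 𝒢.obj (𝒢.s g) := 𝒢.s_s g

lemma obj_t (g : G) : 𝒢.obj (𝒢.t g) := 𝒢.s_t g

lemma t_eq_of_obj {e : G} (he : 𝒢.obj e) : 𝒢.t e = e := by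
  have h : 𝒢.s e = e := he
  rw [← h, 𝒢.t_s]

end Gpd

namespace GpdSetAction

variable {G X : Type*} {𝒢 : Gpd G} (α : GpdSetAction 𝒢 X)

lemma car_inv (g : G) : α.car (𝒢.inv g) = α.car (𝒢.s g) := by
  rw [α.car_t, 𝒢.t_inv, α.car_t (𝒢.s g), 𝒢.t_s]

lemma car_inv_inv (g : G) : α.car (𝒢.inv (𝒢.inv g)) = α.car g := by
  rw [α.car_inv, 𝒢.s_inv, ← α.car_t]

variable {α}

lemma act_mem {g : G} {x : X} (hx : x ∈ α.car (𝒢.inv g)) : α.act g x ∈ α.car g :=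
  (α.bijOn g).mapsTo hx

lemma act_inv_act {g : G} {x : X} (hx : x ∈ α.car (𝒢.inv g)) :
    α.act (𝒢.inv g) (α.act g x) = x := by
  rw [α.act_mul _ _ (𝒢.s_inv g) x hx, 𝒢.inv_mul,
    α.act_id _ (𝒢.obj_s g) x (α.car_inv g ▸ hx)]

lemma Split.eq_of_mem (hs : α.Split) {e e' : G} {x : X} (he : 𝒢.obj e) (hx : x ∈ α.car e)
    (he' : 𝒢.obj e') (hx' : x ∈ α.car e') : e = e' :=
  (hs x).unique ⟨he, hx⟩ ⟨he', hx'⟩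

end GpdSetAction

section Orbit

variable {K X : Type*} {𝒦 : Gpd K} {β : GpdSetAction 𝒦 X}

lemma mem_orbit_self (hs : β.Split) (x : X) : x ∈ orbit β x := by
  obtain ⟨e, ⟨he, hx⟩, -⟩ := hs x
  refine ⟨e, ?_, β.act_id e he x hx⟩
  rwa [β.car_inv, he]

lemma exists_act_eq_of_orbit_eq (hs : β.Split) {x y : X} (h : orbit β y = orbit β x) :
    ∃ κ, x ∈ β.car (𝒦.inv κ) ∧ β.act κ x = y := by
  have hy := mem_orbit_self hs y
  rwa [h] at hy

lemma orbit_act_subset (hs : β.Split) {κ : K} {x : X} (hx : x ∈ β.car (𝒦.inv κ)) :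
    orbit β (β.act κ x) ⊆ orbit β x := by
  rintro _ ⟨κ', hκ', rfl⟩
  have hcomp : 𝒦.s κ' = 𝒦.t κ :=
    hs.eq_of_mem (𝒦.obj_s κ') (β.car_inv κ' ▸ hκ') (𝒦.obj_t κ) (β.car_t κ ▸ β.act_mem hx)
  refine ⟨𝒦.mul κ' κ, ?_, (β.act_mul κ' κ hcomp x hx).symm⟩
  rwa [β.car_inv, 𝒦.s_mul _ _ hcomp, ← β.car_inv]

lemma orbit_act (hs : β.Split) {κ : K} {x : X} (hx : x ∈ β.car (𝒦.inv κ)) :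
    orbit β (β.act κ x) = orbit β x := by
  refine (orbit_act_subset hs hx).antisymm ?_
  have hx' : β.act κ x ∈ β.car (𝒦.inv (𝒦.inv κ)) := by
    rw [β.car_inv_inv]; exact β.act_mem hx
  simpa only [β.act_inv_act hx] using orbit_act_subset hs hx'

end Orbit

namespace GKCompat

variable {G K X : Type*} {𝒢 : Gpd G} {𝒦 : Gpd K} {α : GpdSetAction 𝒢 X}
  {β : GpdSetAction 𝒦 X}

lemma act_mem_car_iff (hc : GKCompat α β) (g : G) {κ : K} {x : X}
    (hx : x ∈ β.car (𝒦.inv κ)) : β.act κ x ∈ α.car g ↔ x ∈ α.car g := by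
  refine ⟨fun h => ?_, fun h => (hc.beta_inv g κ ⟨x, ⟨h, hx⟩, rfl⟩).1⟩
  have h' : β.act κ x ∈ β.car (𝒦.inv (𝒦.inv κ)) := by
    rw [β.car_inv_inv]; exact β.act_mem hx
  simpa only [β.act_inv_act hx] using (hc.beta_inv g (𝒦.inv κ) ⟨_, ⟨h, h'⟩, rfl⟩).1

lemma mem_car_iff_of_orbit_eq (hc : GKCompat α β) (hs : β.Split) (g : G) {x y : X}
    (h : orbit β y = orbit β x) : y ∈ α.car g ↔ x ∈ α.car g := by
  obtain ⟨κ, hx, rfl⟩ := exists_act_eq_of_orbit_eq hs h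
  exact hc.act_mem_car_iff g hx

end GKCompat

section SmashMul

variable {G X A : Type*} [Ring A] {𝒢 : Gpd G} (α : GpdSetAction 𝒢 X)

lemma smashMul_zero_left (f : (G × X) →₀ A) : smashMul α 0 f = 0 :=
  Finsupp.sum_zero_index

lemma smashMul_zero_right (f : (G × X) →₀ A) : smashMul α f 0 = 0 := by
  simp [smashMul]

lemma smashMul_add_left (f₁ f₂ f : (G × X) →₀ A) :
    smashMul α (f₁ + f₂) f = smashMul α f₁ f + smashMul α f₂ f := by
  refine Finsupp.sum_add_index' (fun _ => by simp) fun _ a₁ a₂ => ?_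
  rw [← Finsupp.sum_add]
  refine Finsupp.sum_congr fun _ _ => ?_
  split_ifs <;> simp [add_mul]

lemma smashMul_add_right (f f₁ f₂ : (G × X) →₀ A) :
    smashMul α f (f₁ + f₂) = smashMul α f f₁ + smashMul α f f₂ := by
  rw [smashMul, smashMul, smashMul, ← Finsupp.sum_add]
  refine Finsupp.sum_congr fun _ _ => Finsupp.sum_add_index' (fun _ => by simp) fun _ b₁ b₂ => ?_
  split_ifs <;> simp [mul_add]

lemma smashMul_sum_left {ι : Type*} (s : Finset ι) (f : ι → (G × X) →₀ A)
    (h : (G × X) →₀ A) : smashMul α (∑ i ∈ s, f i) h = ∑ i ∈ s, smashMul α (f i) h :=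
  map_sum (AddMonoidHom.mk' (smashMul α · h) fun _ _ => smashMul_add_left α _ _ _) f s

lemma smashMul_sum_right {ι : Type*} (s : Finset ι) (f : (G × X) →₀ A)
    (h : ι → (G × X) →₀ A) : smashMul α f (∑ i ∈ s, h i) = ∑ i ∈ s, smashMul α f (h i) :=
  map_sum (AddMonoidHom.mk' (smashMul α f) (smashMul_add_right α f)) h s

lemma smashMul_single_single (p q : G × X) (a b : A) :
    smashMul α (Finsupp.single p a) (Finsupp.single q b) =
      if 𝒢.s p.1 = 𝒢.t q.1 ∧ α.act q.1 q.2 = p.2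
      then Finsupp.single (𝒢.mul p.1 q.1, q.2) (a * b) else 0 := by
  rw [smashMul, Finsupp.sum_single_index, Finsupp.sum_single_index] <;> simp

lemma smashMul_single_single_obj {g e : G} {x y : X} (he : 𝒢.obj e) (hy : y ∈ α.car e)
    (a u : A) :
    smashMul α (Finsupp.single (g, x) a) (Finsupp.single (e, y) u) =
      if e = 𝒢.s g ∧ y = x then Finsupp.single (g, x) (a * u) else 0 := by
  rw [smashMul_single_single, 𝒢.t_eq_of_obj he, α.act_id e he y hy]
  by_cases h : e = 𝒢.s g ∧ y = x
  · obtain ⟨rfl, rfl⟩ := h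
    simp [𝒢.mul_src]
  · rw [if_neg (by tauto), if_neg h]

lemma smashMul_sum_single_sum_single (s t : Finset X) (g h : G) (a b : A) :
    smashMul α (∑ x ∈ s, Finsupp.single (g, x) a) (∑ y ∈ t, Finsupp.single (h, y) b) =
      if 𝒢.s g = 𝒢.t h
      then ∑ y ∈ t with α.act h y ∈ s, Finsupp.single (𝒢.mul g h, y) (a * b) else 0 := by
  simp only [smashMul_sum_left, smashMul_sum_right, smashMul_single_single]
  split_ifs with hgh
  · simp only [hgh, true_and]
    rw [Finset.sum_filter]
    exact Finset.sum_congr rfl fun y _ => Finset.sum_ite_eq s (α.act h y) _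
  · simp only [hgh, false_and, if_false, Finset.sum_const_zero]

end SmashMul

section OneE

variable {G K X k A : Type*} [Field k] [Ring A] [Algebra k A] {𝒢 : Gpd G} {𝒦 : Gpd K}
  {𝒜 : GpdGrading 𝒢 k A} {one : G → A}

lemma IsIdFamily.mul_one_src (hG₀ : 𝒢.Objs.Finite) (hone : IsIdFamily 𝒜 one) {g : G} {a : A}
    (ha : a ∈ 𝒜.comp g) : a * one (𝒢.s g) = a := by
  have hsum : a = ∑ e ∈ hG₀.toFinset, a * one e := by
    rw [← Finset.mul_sum, ← finsum_mem_eq_finite_toFinset_sum _ hG₀, ← hone.2, mul_one]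
  have hvanish : ∀ e ∈ hG₀.toFinset, e ≠ 𝒢.s g → a * one e = 0 := by
    intro e he hne
    rw [hG₀.mem_toFinset] at he
    refine 𝒜.mul_eq_zero g e ?_ a ha _ (hone.1 e he).1
    rw [𝒢.t_eq_of_obj he]
    exact Ne.symm hne
  rw [Finset.sum_eq_single_of_mem _ (hG₀.mem_toFinset.2 (𝒢.obj_s g)) hvanish] at hsum
  exact hsum.symm

variable [Finite X] (α : GpdSetAction 𝒢 X) (β : GpdSetAction 𝒦 X)

lemma smashMul_single_OneE (hG₀ : 𝒢.Objs.Finite) (hone : IsIdFamily 𝒜 one) {g : G} {x : X}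
    {a : A} (ha : a ∈ 𝒜.comp g) (hx : x ∈ α.car (𝒢.s g)) (κ : K) :
    smashMul α (Finsupp.single (g, x) a) (OneE α β one κ) =
      if x ∈ β.car κ then Finsupp.single (g, x) a else 0 := by
  rw [OneE, finsum_mem_eq_finite_toFinset_sum _ hG₀, smashMul_sum_right]
  have hinner : ∀ e ∈ hG₀.toFinset, smashMul α (Finsupp.single (g, x) a)
      (∑ᶠ y ∈ β.car κ ∩ α.car e, Finsupp.single (e, y) (one e)) =
        if e = 𝒢.s g ∧ x ∈ β.car κ then Finsupp.single (g, x) a else 0 := by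
    intro e he
    rw [hG₀.mem_toFinset] at he
    rw [finsum_mem_eq_finite_toFinset_sum _ (Set.toFinite _), smashMul_sum_right,
      Finset.sum_congr rfl fun y hy =>
        smashMul_single_single_obj α he ((Set.toFinite _).mem_toFinset.1 hy).2 a (one e)]
    by_cases he' : e = 𝒢.s g
    · subst he'
      simp [hx, hone.mul_one_src hG₀ ha]
    · simp [he']
  have hs : 𝒢.s g ∈ 𝒢.Objs := 𝒢.obj_s g
  rw [Finset.sum_congr rfl hinner]
  simp [ite_and, hs]

lemma smashMul_OneE (hG₀ : 𝒢.Objs.Finite) (hone : IsIdFamily 𝒜 one) {F : (G × X) →₀ A}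
    (hF : F ∈ smashSet α 𝒜) (κ : K) :
    smashMul α F (OneE α β one κ) = F.filter (fun p => p.2 ∈ β.car κ) := by
  conv_lhs => rw [← F.sum_single, Finsupp.sum, smashMul_sum_left]
  rw [Finsupp.filter_eq_sum, Finset.sum_filter]
  refine Finset.sum_congr rfl fun ⟨g, x⟩ hp => ?_
  exact smashMul_single_OneE α β hG₀ hone (hF _).1 ((hF _).2 (Finsupp.mem_support_iff.1 hp)) κ

end OneE

section GammaAct

variable {G K X A : Type*} [Ring A] {𝒦 : Gpd K} {β : GpdSetAction 𝒦 X}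

lemma gammaAct_apply_act (κ : K) (H : (G × X) →₀ A) (g : G) {x : X}
    (hx : x ∈ β.car (𝒦.inv κ)) : gammaAct β κ H (g, β.act κ x) = H (g, x) := by
  rw [gammaAct, Finsupp.sum_apply, Finsupp.sum, Finset.sum_eq_single (g, x)]
  · simp [hx]
  · rintro ⟨g', x'⟩ - hne
    split_ifs with hx'
    · refine Finsupp.single_eq_of_ne fun h => hne ?_
      simp only [Prod.mk.injEq] at h ⊢
      exact ⟨h.1.symm, (β.bijOn κ).injOn hx' hx h.2.symm⟩
    · rfl
  · intro h
    simp [Finsupp.notMem_support_iff.1 h]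

lemma gammaAct_apply_of_notMem (κ : K) (H : (G × X) →₀ A) (g : G) {z : X}
    (hz : z ∉ β.car κ) : gammaAct β κ H (g, z) = 0 := by
  rw [gammaAct, Finsupp.sum_apply, Finsupp.sum]
  refine Finset.sum_eq_zero fun p _ => ?_
  split_ifs with hp
  · exact Finsupp.single_eq_of_ne fun h => hz ((Prod.mk.inj h).2 ▸ β.act_mem hp)
  · rfl

lemma gammaAct_filter_eq_filter_iff (κ : K) (H : (G × X) →₀ A) :
    gammaAct β κ (H.filter fun p => p.2 ∈ β.car (𝒦.inv κ)) = H.filter (fun p => p.2 ∈ β.car κ) ↔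
      ∀ g x, x ∈ β.car (𝒦.inv κ) → H (g, β.act κ x) = H (g, x) := by
  constructor
  · intro h g x hx
    have hgx := Finsupp.ext_iff.1 h (g, β.act κ x)
    rwa [gammaAct_apply_act κ _ g hx, Finsupp.filter_apply, Finsupp.filter_apply, if_pos hx,
      if_pos (β.act_mem hx), eq_comm] at hgx
  · intro h
    ext ⟨g, z⟩
    by_cases hz : z ∈ β.car κ
    · obtain ⟨x, hx, rfl⟩ := (β.bijOn κ).surjOn hz
      rw [gammaAct_apply_act κ _ g hx, Finsupp.filter_apply, Finsupp.filter_apply, if_pos hx,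
        if_pos hz, h g x hx]
    · rw [gammaAct_apply_of_notMem κ _ g hz, Finsupp.filter_apply, if_neg hz]

end GammaAct

section Invariants

variable {G K X k A : Type*} [Field k] [Ring A] [Algebra k A] [Finite X] {𝒢 : Gpd G}
  {𝒦 : Gpd K} {𝒜 : GpdGrading 𝒢 k A} {one : G → A} {α : GpdSetAction 𝒢 X}
  {β : GpdSetAction 𝒦 X}

lemma mem_invariantSet_iff (hG₀ : 𝒢.Objs.Finite) (hone : IsIdFamily 𝒜 one)
    {F : (G × X) →₀ A} : F ∈ invariantSet α β 𝒜 one ↔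
      F ∈ smashSet α 𝒜 ∧ ∀ κ g x, x ∈ β.car (𝒦.inv κ) → F (g, β.act κ x) = F (g, x) := by
  refine and_congr_right fun hF => forall_congr' fun κ => ?_
  rw [smashMul_OneE α β hG₀ hone hF, smashMul_OneE α β hG₀ hone hF,
    gammaAct_filter_eq_filter_iff]

lemma apply_eq_of_mem_invariantSet_of_orbit_eq (hG₀ : 𝒢.Objs.Finite)
    (hone : IsIdFamily 𝒜 one) (hs : β.Split) {F : (G × X) →₀ A}
    (hF : F ∈ invariantSet α β 𝒜 one) (g : G) {x y : X} (h : orbit β y = orbit β x) :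
    F (g, y) = F (g, x) := by
  obtain ⟨κ, hx, rfl⟩ := exists_act_eq_of_orbit_eq hs h
  exact ((mem_invariantSet_iff hG₀ hone).1 hF).2 κ g x hx

end Invariants

section PhiStar

variable {G K X A : Type*} [Ring A] {𝒢 : Gpd G} {𝒦 : Gpd K}
  (α : GpdSetAction 𝒢 X) (β : GpdSetAction 𝒦 X)

lemma phiStar_zero : phiStar α β (0 : (G × OrbT β) →₀ A) = 0 :=
  Finsupp.sum_zero_index

variable [Finite X]

lemma phiStar_apply (f : (G × OrbT β) →₀ A) (g : G) (x : X) :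
    phiStar α β f (g, x) = if x ∈ α.car (𝒢.s g) then f (g, orbMap β x) else 0 := by
  have hterm : ∀ (p : G × OrbT β) (a : A),
      (∑ᶠ y ∈ {y | y ∈ α.car (𝒢.s p.1) ∧ orbit β y = (p.2 : Set X)},
        Finsupp.single (p.1, y) a) (g, x) =
      if p = (g, orbMap β x) ∧ x ∈ α.car (𝒢.s g) then a else 0 := by
    rintro ⟨g', o⟩ a
    rw [finsum_mem_eq_finite_toFinset_sum _ (Set.toFinite _), Finsupp.finsetSum_apply]
    simp only [Finsupp.single_apply, Prod.mk.injEq, ite_and, Finset.sum_ite_irrel,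
      Finset.sum_ite_eq', Finset.sum_const_zero, Set.Finite.mem_toFinset, Set.mem_ofPred_eq]
    by_cases hg : g' = g
    · subst hg
      simp only [orbMap, Subtype.ext_iff, eq_comm (a := orbit β x)]
      split_ifs <;> rfl
    · simp [hg]
  rw [phiStar, Finsupp.sum_apply]
  simp only [hterm, ite_and, Finsupp.sum_ite_eq', Finsupp.mem_support_iff]
  split_ifs <;> simp_all

lemma phiStar_add (f₁ f₂ : (G × OrbT β) →₀ A) :
    phiStar α β (f₁ + f₂) = phiStar α β f₁ + phiStar α β f₂ := by
  ext ⟨g, x⟩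
  simp only [Finsupp.add_apply, phiStar_apply]
  split_ifs <;> simp

lemma phiStar_smul {k : Type*} [Field k] [Algebra k A] (c : k) (f : (G × OrbT β) →₀ A) :
    phiStar α β (c • f) = c • phiStar α β f := by
  ext ⟨g, x⟩
  simp only [Finsupp.smul_apply, phiStar_apply]
  split_ifs <;> simp

lemma phiStar_mem_smashSet {k : Type*} [Field k] [Algebra k A] {𝒜 : GpdGrading 𝒢 k A}
    {lam : GpdSetAction 𝒢 (OrbT β)} {f : (G × OrbT β) →₀ A} (hf : f ∈ smashSet lam 𝒜) :
    phiStar α β f ∈ smashSet α 𝒜 := by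
  rintro ⟨g, x⟩
  rw [phiStar_apply]
  split_ifs with hx
  · exact ⟨(hf (g, orbMap β x)).1, fun _ => hx⟩
  · exact ⟨(𝒜.comp g).zero_mem, fun h => absurd rfl h⟩

lemma phiStar_mem_invariantSet {k : Type*} [Field k] [Algebra k A] {𝒜 : GpdGrading 𝒢 k A}
    {one : G → A} (hG₀ : 𝒢.Objs.Finite) (hone : IsIdFamily 𝒜 one) (hs : β.Split)
    (hc : GKCompat α β) {lam : GpdSetAction 𝒢 (OrbT β)} {f : (G × OrbT β) →₀ A}
    (hf : f ∈ smashSet lam 𝒜) : phiStar α β f ∈ invariantSet α β 𝒜 one := by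
  refine (mem_invariantSet_iff hG₀ hone).2 ⟨phiStar_mem_smashSet α β hf, fun κ g x hx => ?_⟩
  have horb : orbMap β (β.act κ x) = orbMap β x := Subtype.ext (orbit_act hs hx)
  rw [phiStar_apply, phiStar_apply, hc.act_mem_car_iff _ hx, horb]

lemma phiStar_single (p : G × OrbT β) (a : A) :
    phiStar α β (Finsupp.single p a) =
      ∑ y ∈ (Set.toFinite {y | y ∈ α.car (𝒢.s p.1) ∧ orbit β y = p.2}).toFinset,
        Finsupp.single (p.1, y) a := by
  rw [phiStar, Finsupp.sum_single_index, finsum_mem_eq_finite_toFinset_sum]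
  simp

lemma phiStar_mul_single (lam : GpdSetAction 𝒢 (OrbT β))
    (hlam : ∀ g, ∀ x ∈ α.car (𝒢.inv g), lam.act g (orbMap β x) = orbMap β (α.act g x))
    (p q : G × OrbT β) (a b : A) :
    phiStar α β (smashMul lam (Finsupp.single p a) (Finsupp.single q b)) =
      smashMul α (phiStar α β (Finsupp.single p a)) (phiStar α β (Finsupp.single q b)) := by
  rw [smashMul_single_single, phiStar_single, phiStar_single, smashMul_sum_single_sum_single]
  by_cases hst : 𝒢.s p.1 = 𝒢.t q.1
  · have hfilter : ∀ y ∈ (Set.toFinite {y | y ∈ α.car (𝒢.s q.1) ∧ orbit β y = q.2}).toFinset,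
        α.act q.1 y ∈ (Set.toFinite {y | y ∈ α.car (𝒢.s p.1) ∧ orbit β y = p.2}).toFinset ↔
          lam.act q.1 q.2 = p.2 := by
      intro y hy
      rw [Set.Finite.mem_toFinset] at hy ⊢
      have hy' : y ∈ α.car (𝒢.inv q.1) := by rw [α.car_inv]; exact hy.1
      have hmem : α.act q.1 y ∈ α.car (𝒢.s p.1) := by
        rw [hst, ← α.car_t]; exact α.act_mem hy'
      rw [← show orbMap β y = q.2 from Subtype.ext hy.2, hlam q.1 y hy', Subtype.ext_iff]
      exact and_iff_right hmem
    rw [if_pos hst, Finset.filter_congr hfilter]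
    by_cases hl : lam.act q.1 q.2 = p.2
    · rw [if_pos ⟨hst, hl⟩, phiStar_single, Finset.filter_true_of_mem fun _ _ => hl]
      simp only [𝒢.s_mul _ _ hst]
    · rw [if_neg fun h => hl h.2, phiStar_zero, Finset.filter_false_of_mem fun _ _ => hl,
        Finset.sum_empty]
  · rw [if_neg (fun h => hst h.1), if_neg hst, phiStar_zero]

lemma phiStar_mul (lam : GpdSetAction 𝒢 (OrbT β))
    (hlam : ∀ g, ∀ x ∈ α.car (𝒢.inv g), lam.act g (orbMap β x) = orbMap β (α.act g x))
    (f₁ f₂ : (G × OrbT β) →₀ A) :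
    phiStar α β (smashMul lam f₁ f₂) = smashMul α (phiStar α β f₁) (phiStar α β f₂) := by
  induction f₁ using Finsupp.induction_linear with
  | zero => simp only [smashMul_zero_left, phiStar_zero]
  | add f₁ f₁' h h' => simp only [smashMul_add_left, phiStar_add, h, h']
  | single p a =>
    induction f₂ using Finsupp.induction_linear with
    | zero => simp only [smashMul_zero_right, phiStar_zero]
    | add f₂ f₂' h h' => simp only [smashMul_add_right, phiStar_add, h, h']
    | single q b => exact phiStar_mul_single α β lam hlam p q a b

end PhiStar

section Representatives

variable {K X : Type*} {𝒦 : Gpd K} {β : GpdSetAction 𝒦 X}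

def OrbT.rep (o : OrbT β) : X := o.2.choose

lemma orbit_rep (o : OrbT β) : orbit β o.rep = o := o.2.choose_spec

lemma orbMap_rep (o : OrbT β) : orbMap β o.rep = o := Subtype.ext (orbit_rep o)

end Representatives

section PhiStarInv

variable {G K X A : Type*} [Ring A] {𝒦 : Gpd K}

def phiStarInv (β : GpdSetAction 𝒦 X) (F : (G × X) →₀ A) : (G × OrbT β) →₀ A :=
  Finsupp.onFinset (F.support.image fun p => (p.1, orbMap β p.2)) (fun q => F (q.1, q.2.rep))
    fun q hq => Finset.mem_image.2
      ⟨(q.1, q.2.rep), Finsupp.mem_support_iff.2 hq, Prod.ext rfl (orbMap_rep q.2)⟩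

lemma phiStarInv_apply (β : GpdSetAction 𝒦 X) (F : (G × X) →₀ A) (g : G) (o : OrbT β) :
    phiStarInv β F (g, o) = F (g, o.rep) := rfl

variable {k : Type*} [Field k] [Algebra k A] {𝒢 : Gpd G} {𝒜 : GpdGrading 𝒢 k A}
  {α : GpdSetAction 𝒢 X} {β : GpdSetAction 𝒦 X}

lemma phiStarInv_mem_smashSet {lam : GpdSetAction 𝒢 (OrbT β)}
    (hlam : ∀ g, lam.car g = {o : OrbT β | ∃ x ∈ α.car g, orbit β x = (o : Set X)})
    {F : (G × X) →₀ A} (hF : F ∈ smashSet α 𝒜) : phiStarInv β F ∈ smashSet lam 𝒜 := by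
  rintro ⟨g, o⟩
  refine ⟨(hF (g, o.rep)).1, fun h => ?_⟩
  rw [hlam]
  exact ⟨o.rep, (hF (g, o.rep)).2 h, orbit_rep o⟩

variable [Finite X]

lemma phiStar_phiStarInv (hG₀ : 𝒢.Objs.Finite) {one : G → A} (hone : IsIdFamily 𝒜 one)
    (hs : β.Split) {F : (G × X) →₀ A} (hF : F ∈ invariantSet α β 𝒜 one) :
    phiStar α β (phiStarInv β F) = F := by
  ext ⟨g, x⟩
  rw [phiStar_apply, phiStarInv_apply]
  split_ifs with hx
  · exact apply_eq_of_mem_invariantSet_of_orbit_eq hG₀ hone hs hF g (orbit_rep _)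
  · by_contra hne
    exact hx ((hF.1 (g, x)).2 (Ne.symm hne))

lemma phiStarInv_phiStar (hc : GKCompat α β) (hs : β.Split) {lam : GpdSetAction 𝒢 (OrbT β)}
    (hlam : ∀ g, lam.car g = {o : OrbT β | ∃ x ∈ α.car g, orbit β x = (o : Set X)})
    {f : (G × OrbT β) →₀ A} (hf : f ∈ smashSet lam 𝒜) :
    phiStarInv β (phiStar α β f) = f := by
  ext ⟨g, o⟩
  rw [phiStarInv_apply, phiStar_apply, orbMap_rep]
  split_ifs with h
  · rfl
  · by_contra hne
    have ho := (hf (g, o)).2 (Ne.symm hne)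
    rw [hlam] at ho
    obtain ⟨x, hx, hxo⟩ := ho
    exact h ((hc.mem_car_iff_of_orbit_eq hs _ ((orbit_rep o).trans hxo.symm)).2 hx)

end PhiStarInv

theorem phiStar_image_eq_invariants_general
    {G : Type u} {K : Type*} (𝒢 : Gpd G) (𝒦 : Gpd K) {X : Type v}
    (k : Type*) (A : Type w) [Field k] [Ring A] [Algebra k A] [Finite X]
    (hG₀ : 𝒢.Objs.Finite) (𝒜 : GpdGrading 𝒢 k A)
    (α : GpdSetAction 𝒢 X) (β : GpdSetAction 𝒦 X)
    (hsplitβ : β.Split) (hc : GKCompat α β)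
    (one : G → A) (hone : IsIdFamily 𝒜 one)
    -- `λ` is the induced `𝒢`-action on the orbit set `O^𝒦`
    (lam : GpdSetAction 𝒢 (OrbT β))
    (hlam₁ : ∀ g, lam.car g = {o : OrbT β | ∃ x ∈ α.car g, orbit β x = (o : Set X)})
    (hlam₂ : ∀ g, ∀ x ∈ α.car (𝒢.inv g), lam.act g (orbMap β x) = orbMap β (α.act g x)) :
    -- `φ*(A #_λ^𝒢 O^𝒦) = (A #_α^𝒢 X)^γ`
    phiStar α β '' smashSet lam 𝒜 = invariantSet α β 𝒜 one ∧
    -- in particular `φ*` is an isomorphism of algebras onto the invariants: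
    Set.InjOn (phiStar α β) (smashSet lam 𝒜) ∧
    (∀ f₁ ∈ smashSet lam 𝒜, ∀ f₂ ∈ smashSet lam 𝒜,
      phiStar α β (f₁ + f₂) = phiStar α β f₁ + phiStar α β f₂) ∧
    (∀ (c : k), ∀ f ∈ smashSet lam 𝒜, phiStar α β (c • f) = c • phiStar α β f) ∧
    (∀ f₁ ∈ smashSet lam 𝒜, ∀ f₂ ∈ smashSet lam 𝒜,
      phiStar α β (smashMul lam f₁ f₂) = smashMul α (phiStar α β f₁) (phiStar α β f₂)) := by
  have hleft : Set.LeftInvOn (phiStarInv β) (phiStar α β) (smashSet lam 𝒜) :=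
    fun f hf => phiStarInv_phiStar hc hsplitβ hlam₁ hf
  refine ⟨?_, hleft.injOn, fun f₁ _ f₂ _ => phiStar_add α β f₁ f₂,
    fun c f _ => phiStar_smul α β c f, fun f₁ _ f₂ _ => phiStar_mul α β lam hlam₂ f₁ f₂⟩
  refine Set.Subset.antisymm ?_ fun F hF =>
    ⟨phiStarInv β F, phiStarInv_mem_smashSet hlam₁ hF.1, phiStar_phiStarInv hG₀ hone hsplitβ hF⟩
  rintro _ ⟨f, hf, rfl⟩
  exact phiStar_mem_invariantSet α β hG₀ hone hsplitβ hc hf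

/-- For a finite `(𝒢_α, 𝒦_β)`-set `X` split for both
actions, the image of the monomorphism `φ* : A #_λ^𝒢 O^𝒦 → A #_α^𝒢 X`
induced by the orbit map equals the subalgebra of invariants
`(A #_α^𝒢 X)^γ`; in particular `A #_λ^𝒢 O^𝒦 ≅ (A #_α^𝒢 X)^γ` as algebras. -/
theorem phiStar_image_eq_invariants
    {G : Type u} {K : Type*} (𝒢 : Gpd G) (𝒦 : Gpd K) {X : Type v}
    (k : Type*) (A : Type w) [Field k] [Ring A] [Algebra k A] [Finite X]
    (hG₀ : 𝒢.Objs.Finite) (𝒜 : GpdGrading 𝒢 k A)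
    (α : GpdSetAction 𝒢 X) (β : GpdSetAction 𝒦 X)
    (hsplitα : α.Split) (hsplitβ : β.Split) (hc : GKCompat α β)
    (one : G → A) (hone : IsIdFamily 𝒜 one)
    -- `λ` is the induced `𝒢`-action on the orbit set `O^𝒦`
    (lam : GpdSetAction 𝒢 (OrbT β))
    (hlam₁ : ∀ g, lam.car g = {o : OrbT β | ∃ x ∈ α.car g, orbit β x = (o : Set X)})
    (hlam₂ : ∀ g, ∀ x ∈ α.car (𝒢.inv g), lam.act g (orbMap β x) = orbMap β (α.act g x)) :
    -- `φ*(A #_λ^𝒢 O^𝒦) = (A #_α^𝒢 X)^γ`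
    phiStar α β '' smashSet lam 𝒜 = invariantSet α β 𝒜 one ∧
    -- in particular `φ*` is an isomorphism of algebras onto the invariants:
    Set.InjOn (phiStar α β) (smashSet lam 𝒜) ∧
    (∀ f₁ ∈ smashSet lam 𝒜, ∀ f₂ ∈ smashSet lam 𝒜,
      phiStar α β (f₁ + f₂) = phiStar α β f₁ + phiStar α β f₂) ∧
    (∀ (c : k), ∀ f ∈ smashSet lam 𝒜, phiStar α β (c • f) = c • phiStar α β f) ∧
    (∀ f₁ ∈ smashSet lam 𝒜, ∀ f₂ ∈ smashSet lam 𝒜,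
      phiStar α β (smashMul lam f₁ f₂) = smashMul α (phiStar α β f₁) (phiStar α β f₂)) :=
  phiStar_image_eq_invariants_general 𝒢 𝒦 k A hG₀ 𝒜 α β hsplitβ hc one hone lam hlam₁ hlam₂

end
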